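/- arXiv:2303.08441 — 2 statements merged into one kernel-verified Lean document; each statement's English description precedes it below -/
import Mathlib

section
/- Let k be a field and let f, h, a, b be polynomials over k with a ≠ 0, such that a divides b² + h·b - f. Define a' = (f - b·h - b²)/a and b' = (-h - b) mod a'. If a' ≠ 0, then a' divides b'² + h·b' - f. -/
open Polynomial

/-- The reduction step of Cantor's algorithm preserves the Mumford divisibility
condition: if `a ∣ b² + h·b - f` and `a' = (f - b·h - b²)/a`, `b' = (-h - b) mod a'`,
then `a' ∣ b'² + h·b' - f` (provided `a ≠ 0` and `a' ≠ 0`). -/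
theorem cantor_reduction_divisibility {k : Type} [Field k] (f h a b : k[X])
    (ha : a ≠ 0) (hdvd : a ∣ b ^ 2 + h * b - f)
    (a' b' : k[X]) (ha' : a' = (f - b * h - b ^ 2) / a) (hb' : b' = (-h - b) % a')
    (ha'0 : a' ≠ 0) :
    a' ∣ b' ^ 2 + h * b' - f := by
  have hdvd' : a ∣ f - b * h - b ^ 2 := by
    have := hdvd.neg_right
    have e : -(b ^ 2 + h * b - f) = f - b * h - b ^ 2 := by ring
    rwa [e] at this
  have hmul : a * a' = f - b * h - b ^ 2 := by
    rw [ha']; exact EuclideanDomain.mul_div_cancel' ha hdvd'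
  have h1 : a' ∣ f - b * h - b ^ 2 := ⟨a, by rw [← hmul]; ring⟩
  have h2 : a' ∣ b' - (-h - b) := by
    have := EuclideanDomain.div_add_mod (-h - b) a'
    refine ⟨-((-h - b) / a'), ?_⟩
    rw [hb']
    linear_combination this
  have key : b' ^ 2 + h * b' - f =
      (b' - (-h - b)) * (b' + (-h - b) + h) + (-(f - b * h - b ^ 2)) := by ring
  rw [key]
  exact dvd_add (h2.mul_right _) h1.neg_right
end

section
/- Let k be a field, g ≥ 1, and let f, h, a, b be polynomials over k with deg f = 2g + 1, deg h ≤ g, a monic, a ≠ 0, a divides b² + h·b - f, deg b < deg a, and deg a > g. Then the polynomial a' = (f - b·h - b²)/a satisfies deg a' < deg a. -/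
open Polynomial

/-- Degree decrease in the reduction step of Cantor's algorithm on an imaginary
hyperelliptic curve `y² + y h(x) = f(x)` of genus `g` (`deg f = 2g + 1`, `deg h ≤ g`):
if `(a, b)` is semi-reduced (`a` monic, `a ∣ b² + h·b - f`, `deg b < deg a`) and
`deg a > g`, then `a' = (f - b·h - b²)/a` satisfies `deg a' < deg a`. -/
theorem cantor_reduction_degree_decrease {k : Type} [Field k] (g : ℕ) (hg : 1 ≤ g)
    (f h a b : k[X]) (hf : f.natDegree = 2 * g + 1) (hh : h.natDegree ≤ g)
    (hamonic : a.Monic) (ha : a ≠ 0) (hdvd : a ∣ b ^ 2 + h * b - f)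
    (hba : b.degree < a.degree) (hag : g < a.natDegree) :
    ((f - b * h - b ^ 2) / a).degree < a.degree := by
  obtain ⟨q, hq⟩ := (dvd_neg.mpr hdvd)
  have hM : f - b * h - b ^ 2 = a * q := by linear_combination hq
  rw [hM, mul_div_cancel_left₀ _ ha]
  rcases eq_or_ne q 0 with rfl | hq0
  · simp only [degree_zero]
    exact bot_lt_iff_ne_bot.mpr (fun hb => ha (degree_eq_bot.mp hb))
  have hb : b.natDegree < a.natDegree := by
    rcases eq_or_ne b 0 with rfl | hb0
    · simp only [natDegree_zero]; omega
    · exact natDegree_lt_natDegree hb0 hba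
  have hdeg : (f - b * h - b ^ 2).natDegree = a.natDegree + q.natDegree := by
    rw [hM, natDegree_mul ha hq0]
  have h1 : (f - b * h - b ^ 2).natDegree ≤
      max (max f.natDegree (b * h).natDegree) (b ^ 2).natDegree :=
    le_trans (natDegree_sub_le _ _) (max_le_max (natDegree_sub_le _ _) le_rfl)
  have h2 : (b * h).natDegree ≤ b.natDegree + h.natDegree := natDegree_mul_le
  have h3 : (b ^ 2).natDegree ≤ 2 * b.natDegree := by
    simpa [two_mul] using natDegree_pow_le (p := b) (n := 2)
  apply degree_lt_degree
  simp only [le_max_iff, max_le_iff] at h1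
  omega
end
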